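/- For a > 0, the Osher–Sethian numerical Hamiltonian Ĥ(p⁻,p⁺,q⁻,q⁺) = a·P/√(P+Q), where P = min(p⁺,0)² + max(p⁻,0)² and Q = min(q⁻,0)² + max(q⁺,0)², is monotone: nondecreasing in p⁻, q⁻ and nonincreasing in p⁺, q⁺ (on the set where P + Q > 0). -/
import Mathlib

/-- Core monotonicity in P: for `0 ≤ p ≤ p'`, `0 ≤ q`,
`p/√(p+q) ≤ p'/√(p'+q)`. -/
lemma aux_mono_P (p p' q : ℝ) (hp : 0 ≤ p) (hpp : p ≤ p') (hq : 0 ≤ q)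
    (h1 : 0 < p + q) (h2 : 0 < p' + q) :
    p / Real.sqrt (p + q) ≤ p' / Real.sqrt (p' + q) := by
  have s1 : 0 < Real.sqrt (p + q) := Real.sqrt_pos.mpr h1
  have s2 : 0 < Real.sqrt (p' + q) := Real.sqrt_pos.mpr h2
  rw [div_le_div_iff₀ s1 s2]
  have e1 : p * Real.sqrt (p' + q) = Real.sqrt (p ^ 2 * (p' + q)) := by
    rw [Real.sqrt_mul (by positivity), Real.sqrt_sq hp]
  have e2 : p' * Real.sqrt (p + q) = Real.sqrt (p' ^ 2 * (p + q)) := by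
    rw [Real.sqrt_mul (by positivity), Real.sqrt_sq (hp.trans hpp)]
  rw [e1, e2]
  apply Real.sqrt_le_sqrt
  nlinarith [mul_nonneg (mul_nonneg hp (hp.trans hpp)) (sub_nonneg.mpr hpp),
    mul_nonneg (mul_nonneg hq (sub_nonneg.mpr hpp)) (by linarith : 0 ≤ p + p')]

/-- Antitonicity in Q: for `0 ≤ p`, `0 ≤ q ≤ q'`, `p/√(p+q') ≤ p/√(p+q)`. -/
lemma aux_anti_Q (p q q' : ℝ) (hp : 0 ≤ p) (hqq : q ≤ q')
    (h1 : 0 < p + q) :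
    p / Real.sqrt (p + q') ≤ p / Real.sqrt (p + q) := by
  have s1 : 0 < Real.sqrt (p + q) := Real.sqrt_pos.mpr h1
  exact div_le_div_of_nonneg_left hp s1
    (Real.sqrt_le_sqrt (by linarith))

/-- For `a > 0`, the Osher–Sethian numerical Hamiltonian
`Ĥ = a P/√(P+Q)`, with `P = min(p⁺,0)² + max(p⁻,0)²` and `Q = min(q⁻,0)² + max(q⁺,0)²`,
is monotone on the set where `P + Q > 0`: nondecreasing in `p⁻, q⁻` and
nonincreasing in `p⁺, q⁺`. -/
theorem osher_sethian_hamiltonian_monotone (a : ℝ) (ha : 0 < a)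
    (P : ℝ → ℝ → ℝ) (Q : ℝ → ℝ → ℝ)
    (hP : ∀ pm pp, P pm pp = min pp 0 ^ 2 + max pm 0 ^ 2)
    (hQ : ∀ qm qp, Q qm qp = min qm 0 ^ 2 + max qp 0 ^ 2)
    (H : ℝ → ℝ → ℝ → ℝ → ℝ)
    (hH : ∀ pm pp qm qp, H pm pp qm qp =
      a * P pm pp / Real.sqrt (P pm pp + Q qm qp)) :
    (∀ pm pm' pp qm qp, pm ≤ pm' → 0 < P pm pp + Q qm qp → 0 < P pm' pp + Q qm qp →
      H pm pp qm qp ≤ H pm' pp qm qp) ∧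
    (∀ pm pp pp' qm qp, pp ≤ pp' → 0 < P pm pp + Q qm qp → 0 < P pm pp' + Q qm qp →
      H pm pp' qm qp ≤ H pm pp qm qp) ∧
    (∀ pm pp qm qm' qp, qm ≤ qm' → 0 < P pm pp + Q qm qp → 0 < P pm pp + Q qm' qp →
      H pm pp qm qp ≤ H pm pp qm' qp) ∧
    (∀ pm pp qm qp qp', qp ≤ qp' → 0 < P pm pp + Q qm qp → 0 < P pm pp + Q qm qp' →
      H pm pp qm qp' ≤ H pm pp qm qp) := by
  have hPnn : ∀ pm pp, 0 ≤ P pm pp := fun pm pp => by rw [hP]; positivity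
  have hQnn : ∀ qm qp, 0 ≤ Q qm qp := fun qm qp => by rw [hQ]; positivity
  refine ⟨?_, ?_, ?_, ?_⟩
  · intro pm pm' pp qm qp h h1 h2
    rw [hH, hH, mul_div_assoc, mul_div_assoc]
    apply mul_le_mul_of_nonneg_left _ ha.le
    apply aux_mono_P _ _ _ (hPnn _ _) _ (hQnn _ _) h1 h2
    rw [hP, hP]
    have : max pm 0 ≤ max pm' 0 := max_le_max h le_rfl
    nlinarith [le_max_right pm (0:ℝ)]
  · intro pm pp pp' qm qp h h1 h2
    rw [hH, hH, mul_div_assoc, mul_div_assoc]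
    apply mul_le_mul_of_nonneg_left _ ha.le
    apply aux_mono_P _ _ _ (hPnn _ _) _ (hQnn _ _) h2 h1
    rw [hP, hP]
    have h3 : min pp 0 ≤ min pp' 0 := min_le_min h le_rfl
    nlinarith [min_le_right pp' (0:ℝ)]
  · intro pm pp qm qm' qp h h1 h2
    rw [hH, hH, mul_div_assoc, mul_div_assoc]
    apply mul_le_mul_of_nonneg_left _ ha.le
    apply aux_anti_Q _ _ _ (hPnn _ _) _ h2
    rw [hQ, hQ]
    have h3 : min qm 0 ≤ min qm' 0 := min_le_min h le_rfl
    nlinarith [min_le_right qm' (0:ℝ)]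
  · intro pm pp qm qp qp' h h1 h2
    rw [hH, hH, mul_div_assoc, mul_div_assoc]
    apply mul_le_mul_of_nonneg_left _ ha.le
    apply aux_anti_Q _ _ _ (hPnn _ _) _ h1
    rw [hQ, hQ]
    have h3 : max qp 0 ≤ max qp' 0 := max_le_max h le_rfl
    nlinarith [le_max_right qp (0:ℝ)]
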